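/- Let c : ℝ → ℝ be continuously differentiable with 0 < c_* ≤ c(θ) ≤ c^* and c'(θ) ≥ 0 for all θ, and suppose A := sup_{θ ∈ ℝ} c'(θ)/(2c(θ)) is finite. Let T > 0 and let u : ℝ × ℝ → ℝ be twice continuously differentiable solving u_tt = c(u)² u_xx on [0,T] × ℝ, with Riemann variables R := u_t + c(u)u_x and S := u_t − c(u)u_x. Assume R(t,x) → 0 and S(t,x) → 0 as |x| → ∞, uniformly for t ∈ [0,T], and set P := √(c^*/c_*) · max( sup_{x} max(R(0,x),0), sup_{x} max(S(0,x),0) ) and m₀ := min{ 0, inf_{x} R(0,x), inf_{x} S(0,x) }, assuming P and m₀ are finite. Then for all (t,x) ∈ [0,T] × ℝ, P + (m₀ − P)·exp(A·P·T) ≤ R(t,x) ≤ P and P + (m₀ − P)·exp(A·P·T) ≤ S(t,x) ≤ P. -/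

import Mathlib

/-- Partial derivative in the first (time) variable. -/
noncomputable def pdt (u : ℝ × ℝ → ℝ) : ℝ × ℝ → ℝ :=
  fun p => deriv (fun s => u (s, p.2)) p.1

/-- Partial derivative in the second (space) variable. -/
noncomputable def pdx (u : ℝ × ℝ → ℝ) : ℝ × ℝ → ℝ :=
  fun p => deriv (fun y => u (p.1, y)) p.2

/-- The Riemann variable `R = u_t + c(u) u_x`. -/
noncomputable def Rv (c : ℝ → ℝ) (u : ℝ × ℝ → ℝ) : ℝ × ℝ → ℝ :=
  fun p => pdt u p + c (u p) * pdx u p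

/-- The Riemann variable `S = u_t - c(u) u_x`. -/
noncomputable def Sv (c : ℝ → ℝ) (u : ℝ × ℝ → ℝ) : ℝ × ℝ → ℝ :=
  fun p => pdt u p - c (u p) * pdx u p
open Set Real Filter Topology

/-- generic Riemann variable: `W σ = u_t - σ c(u) u_x`; `W 1 = S`, `W (-1) = R`. -/
noncomputable def W (σ : ℝ) (c : ℝ → ℝ) (u : ℝ × ℝ → ℝ) : ℝ × ℝ → ℝ :=
  fun p => pdt u p - σ * (c (u p) * pdx u p)

lemma W_one (c : ℝ → ℝ) (u : ℝ × ℝ → ℝ) : W 1 c u = Sv c u := by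
  funext p; simp [W, Sv]

lemma W_neg_one (c : ℝ → ℝ) (u : ℝ × ℝ → ℝ) : W (-1) c u = Rv c u := by
  funext p; simp only [W, Rv]; ring

lemma CLM_eval {M : Type*} [NormedAddCommGroup M] [NormedSpace ℝ M]
    (L : (ℝ × ℝ) →L[ℝ] M) (a b : ℝ) : L (a, b) = a • L (1, 0) + b • L (0, 1) := by
  have : ((a, b) : ℝ × ℝ) = a • ((1:ℝ), (0:ℝ)) + b • ((0:ℝ), (1:ℝ)) := by
    simp [Prod.ext_iff]
  rw [this, map_add, map_smul, map_smul]

lemma pdt_eq {u : ℝ × ℝ → ℝ} (hu : ContDiff ℝ 2 u) (p : ℝ × ℝ) :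
    pdt u p = fderiv ℝ u p (1, 0) := by
  have h1 : HasDerivAt (fun s : ℝ => (s, p.2)) ((1:ℝ), (0:ℝ)) p.1 :=
    (hasDerivAt_id p.1).prodMk (hasDerivAt_const _ _)
  have h2 : HasFDerivAt u (fderiv ℝ u p) p :=
    (hu.differentiable (by norm_num) p).hasFDerivAt
  have := h2.comp_hasDerivAt p.1 (by simpa using h1)
  simpa [pdt, Function.comp_def] using this.deriv

lemma pdx_eq {u : ℝ × ℝ → ℝ} (hu : ContDiff ℝ 2 u) (p : ℝ × ℝ) :
    pdx u p = fderiv ℝ u p (0, 1) := by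
  have h1 : HasDerivAt (fun y : ℝ => (p.1, y)) ((0:ℝ), (1:ℝ)) p.2 :=
    (hasDerivAt_const _ _).prodMk (hasDerivAt_id p.2)
  have h2 : HasFDerivAt u (fderiv ℝ u p) p :=
    (hu.differentiable (by norm_num) p).hasFDerivAt
  have := h2.comp_hasDerivAt p.2 (by simpa using h1)
  simpa [pdx, Function.comp_def] using this.deriv

lemma hasFDerivAt_fderiv {u : ℝ × ℝ → ℝ} (hu : ContDiff ℝ 2 u) (p : ℝ × ℝ) :
    HasFDerivAt (fderiv ℝ u) (fderiv ℝ (fderiv ℝ u) p) p :=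
  (((hu.fderiv_right (m := 1) (by norm_num)).differentiable one_ne_zero) p).hasFDerivAt

lemma hasFDerivAt_pdt {u : ℝ × ℝ → ℝ} (hu : ContDiff ℝ 2 u) (p : ℝ × ℝ) :
    HasFDerivAt (pdt u)
      ((ContinuousLinearMap.apply ℝ ℝ ((1:ℝ), (0:ℝ))).comp (fderiv ℝ (fderiv ℝ u) p)) p := by
  have hfun : pdt u = fun q => fderiv ℝ u q (1, 0) := funext (pdt_eq hu)
  rw [hfun]
  exact (ContinuousLinearMap.apply ℝ ℝ ((1:ℝ), (0:ℝ))).hasFDerivAt.comp p (hasFDerivAt_fderiv hu p)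

lemma hasFDerivAt_pdx {u : ℝ × ℝ → ℝ} (hu : ContDiff ℝ 2 u) (p : ℝ × ℝ) :
    HasFDerivAt (pdx u)
      ((ContinuousLinearMap.apply ℝ ℝ ((0:ℝ), (1:ℝ))).comp (fderiv ℝ (fderiv ℝ u) p)) p := by
  have hfun : pdx u = fun q => fderiv ℝ u q (0, 1) := funext (pdx_eq hu)
  rw [hfun]
  exact (ContinuousLinearMap.apply ℝ ℝ ((0:ℝ), (1:ℝ))).hasFDerivAt.comp p (hasFDerivAt_fderiv hu p)

lemma pdt_pdt_eq {u : ℝ × ℝ → ℝ} (hu : ContDiff ℝ 2 u) (p : ℝ × ℝ) :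
    pdt (pdt u) p = fderiv ℝ (fderiv ℝ u) p (1, 0) (1, 0) := by
  have h1 : HasDerivAt (fun s : ℝ => (s, p.2)) ((1:ℝ), (0:ℝ)) p.1 :=
    (hasDerivAt_id p.1).prodMk (hasDerivAt_const _ _)
  have h2 := (hasFDerivAt_pdt hu p).comp_hasDerivAt p.1 (by simpa using h1)
  simpa [pdt, Function.comp_def] using h2.deriv

lemma pdx_pdx_eq {u : ℝ × ℝ → ℝ} (hu : ContDiff ℝ 2 u) (p : ℝ × ℝ) :
    pdx (pdx u) p = fderiv ℝ (fderiv ℝ u) p (0, 1) (0, 1) := by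
  have h1 : HasDerivAt (fun y : ℝ => (p.1, y)) ((0:ℝ), (1:ℝ)) p.2 :=
    (hasDerivAt_const _ _).prodMk (hasDerivAt_id p.2)
  have h2 := (hasFDerivAt_pdx hu p).comp_hasDerivAt p.2 (by simpa using h1)
  simpa [pdx, Function.comp_def] using h2.deriv

lemma schwarz {u : ℝ × ℝ → ℝ} (hu : ContDiff ℝ 2 u) (p : ℝ × ℝ) :
    fderiv ℝ (fderiv ℝ u) p (1, 0) (0, 1) = fderiv ℝ (fderiv ℝ u) p (0, 1) (1, 0) :=
  second_derivative_symmetric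
    (fun y => (hu.differentiable (by norm_num) y).hasFDerivAt)
    (hasFDerivAt_fderiv hu p) _ _

/-- Derivative of the transported Riemann variable `X(t) = W σ (t, γ t)` along a
characteristic `γ' = σ c(u)`. -/
lemma hasDerivWithinAt_W_along {c : ℝ → ℝ} {u : ℝ × ℝ → ℝ}
    (hc : ContDiff ℝ 1 c) (hu : ContDiff ℝ 2 u)
    (hcpos : ∀ θ, 0 < c θ) {σ : ℝ} (hσ : σ * σ = 1)
    {γ : ℝ → ℝ} {s : ℝ} {I : Set ℝ}
    (hγ : HasDerivWithinAt γ (σ * c (u (s, γ s))) I s)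
    (hwp : pdt (pdt u) (s, γ s) = (c (u (s, γ s))) ^ 2 * pdx (pdx u) (s, γ s)) :
    HasDerivWithinAt (fun t => W σ c u (t, γ t))
      (deriv c (u (s, γ s)) / (2 * c (u (s, γ s))) * W (-σ) c u (s, γ s) *
        (W σ c u (s, γ s) - W (-σ) c u (s, γ s))) I s := by
  set p : ℝ × ℝ := (s, γ s) with hp
  set cc : ℝ := c (u p) with hcc
  set H := fderiv ℝ (fderiv ℝ u) p with hH
  set D := fderiv ℝ u p with hD
  -- the curve
  have hφ : HasDerivWithinAt (fun t => (t, γ t)) ((1:ℝ), σ * cc) I s :=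
    (hasDerivWithinAt_id s I).prodMk hγ
  -- u along the curve
  have hu2 : HasFDerivAt u D p := (hu.differentiable (by norm_num) p).hasFDerivAt
  have huφ : HasDerivWithinAt (fun t => u (t, γ t)) (D (1, σ * cc)) I s :=
    hu2.comp_hasDerivWithinAt s hφ
  -- c(u) along the curve
  have hcu : HasDerivWithinAt (fun t => c (u (t, γ t)))
      (deriv c (u p) * D (1, σ * cc)) I s := by
    have h3 : HasDerivAt c (deriv c (u p)) (u p) :=
      ((hc.differentiable one_ne_zero) (u p)).hasDerivAt.deriv ▸
        ((hc.differentiable one_ne_zero) (u p)).hasDerivAt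
    exact h3.comp_hasDerivWithinAt s huφ
  -- pdt u and pdx u along the curve
  have hptφ : HasDerivWithinAt (fun t => pdt u (t, γ t)) (H (1, σ * cc) (1, 0)) I s := by
    have := (hasFDerivAt_pdt hu p).comp_hasDerivWithinAt s hφ
    simpa [Function.comp_def] using this
  have hpxφ : HasDerivWithinAt (fun t => pdx u (t, γ t)) (H (1, σ * cc) (0, 1)) I s := by
    have := (hasFDerivAt_pdx hu p).comp_hasDerivWithinAt s hφ
    simpa [Function.comp_def] using this
  -- assemble W σ ∘ φ
  have hW : HasDerivWithinAt (fun t => W σ c u (t, γ t))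
      (H (1, σ * cc) (1, 0) -
        σ * ((deriv c (u p) * D (1, σ * cc)) * pdx u p + c (u p) * H (1, σ * cc) (0, 1))) I s := by
    have := hptφ.sub ((hcu.mul hpxφ).const_mul σ)
    exact this
  -- identify the derivative value
  have key : H (1, σ * cc) (1, 0) -
        σ * ((deriv c (u p) * D (1, σ * cc)) * pdx u p + c (u p) * H (1, σ * cc) (0, 1))
      = deriv c (u p) / (2 * cc) * W (-σ) c u p * (W σ c u p - W (-σ) c u p) := by
    have e1 : (H ((1:ℝ), σ * cc)) = H (1, 0) + (σ * cc) • H (0, 1) := by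
      simpa using CLM_eval H 1 (σ * cc)
    have e2 : D (1, σ * cc) = D (1, 0) + (σ * cc) * D (0, 1) := by
      simpa [smul_eq_mul] using CLM_eval D 1 (σ * cc)
    have hptp : pdt u p = D (1, 0) := pdt_eq hu p
    have hpxp : pdx u p = D (0, 1) := pdx_eq hu p
    have hwave' : H (1, 0) (1, 0) = cc ^ 2 * H (0, 1) (0, 1) := by
      have := hwp
      rwa [pdt_pdt_eq hu, pdx_pdx_eq hu] at this
    have hsym : H (1, 0) (0, 1) = H (0, 1) (1, 0) := schwarz hu p
    have hcne : cc ≠ 0 := ne_of_gt (hcpos _)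
    simp only [W, e1, ContinuousLinearMap.add_apply, ContinuousLinearMap.coe_smul',
      Pi.smul_apply, smul_eq_mul, hptp, hpxp, e2, hwave', hsym]
    field_simp
    linear_combination (-(2 * cc ^ 3 * ((H (0, 1)) (0, 1)))) * hσ
  rw [key] at hW
  exact hW

/-- Derivative of `c(u)` along a characteristic. -/
lemma hasDerivWithinAt_cu_along {c : ℝ → ℝ} {u : ℝ × ℝ → ℝ}
    (hc : ContDiff ℝ 1 c) (hu : ContDiff ℝ 2 u)
    {σ : ℝ} {γ : ℝ → ℝ} {s : ℝ} {I : Set ℝ}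
    (hγ : HasDerivWithinAt γ (σ * c (u (s, γ s))) I s) :
    HasDerivWithinAt (fun t => c (u (t, γ t)))
      (deriv c (u (s, γ s)) * W (-σ) c u (s, γ s)) I s := by
  set p : ℝ × ℝ := (s, γ s) with hp
  set cc : ℝ := c (u p) with hcc
  set D := fderiv ℝ u p with hD
  have hφ : HasDerivWithinAt (fun t => (t, γ t)) ((1:ℝ), σ * cc) I s :=
    (hasDerivWithinAt_id s I).prodMk hγ
  have hu2 : HasFDerivAt u D p := (hu.differentiable (by norm_num) p).hasFDerivAt
  have huφ : HasDerivWithinAt (fun t => u (t, γ t)) (D (1, σ * cc)) I s :=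
    hu2.comp_hasDerivWithinAt s hφ
  have h3 : HasDerivAt c (deriv c (u p)) (u p) :=
    ((hc.differentiable one_ne_zero) (u p)).hasDerivAt
  have := h3.comp_hasDerivWithinAt s huφ
  have hval : D (1, σ * cc) = W (-σ) c u p := by
    have e2 : D (1, σ * cc) = D (1, 0) + (σ * cc) * D (0, 1) := by
      simpa [smul_eq_mul] using CLM_eval D 1 (σ * cc)
    simp only [W, pdt_eq hu, pdx_eq hu, e2, ← hD, ← hcc]
    ring
  rw [hval] at this
  exact this

/-- Existence of a characteristic curve ending at `(t₁, x₁)`. -/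
lemma exists_char {c : ℝ → ℝ} {u : ℝ × ℝ → ℝ} {clow chigh T : ℝ}
    (hc : ContDiff ℝ 1 c) (hu : ContDiff ℝ 2 u) (hclow : 0 < clow)
    (hcbd : ∀ θ, clow ≤ c θ ∧ c θ ≤ chigh) (hT : 0 < T)
    (σ : ℝ) (hσ : σ * σ = 1) {t₁ : ℝ} (ht₁ : t₁ ∈ Set.Icc 0 T) (x₁ : ℝ) :
    ∃ γ : ℝ → ℝ, γ t₁ = x₁ ∧
      ∀ s ∈ Set.Icc 0 t₁, HasDerivWithinAt γ (σ * c (u (s, γ s))) (Set.Icc 0 t₁) s := by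
  have hσ1 : |σ| = 1 := by
    rcases abs_cases σ with h | h <;> nlinarith [h.1, h.2]
  have hch0 : 0 < chigh := lt_of_lt_of_le hclow (le_trans (hcbd 0).1 (hcbd 0).2)
  set ρ : ℝ := chigh * T + 1 with hρ
  set Q : Set (ℝ × ℝ) := Set.Icc 0 T ×ˢ Metric.closedBall x₁ ρ with hQ
  have hQc : IsCompact Q := (isCompact_Icc).prod (isCompact_closedBall _ _)
  have hQconv : Convex ℝ Q := (convex_Icc _ _).prod (convex_closedBall _ _)
  -- C¹ bound for F = c ∘ u on Q
  set F : ℝ × ℝ → ℝ := fun p => c (u p) with hF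
  have hFc : ContDiff ℝ 1 F := hc.comp (hu.of_le (by norm_num))
  have hfd : Continuous fun p => fderiv ℝ F p := (hFc.fderiv_right (m := 0) le_rfl).continuous
  obtain ⟨M, hM⟩ := hQc.exists_bound_of_continuousOn (hfd.continuousOn (s := Q))
  set L : NNReal := ⟨max M 0, le_max_right _ _⟩ with hL
  have hFlip : LipschitzOnWith L F Q := by
    apply Convex.lipschitzOnWith_of_nnnorm_hasFDerivWithin_le
      (f' := fun p => fderiv ℝ F p)
      (fun p hp => ((hFc.differentiable one_ne_zero p).hasFDerivAt).hasFDerivWithinAt) ?_ hQconv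
    intro p hp
    rw [← NNReal.coe_le_coe]
    exact le_trans (hM p hp) (le_max_left M 0)
  have hρ0 : 0 ≤ ρ := by rw [hρ]; nlinarith [hT.le, hch0.le]
  set ρN : NNReal := ⟨ρ, hρ0⟩ with hρN
  set cN : NNReal := ⟨chigh, hch0.le⟩ with hcN
  have hpl : IsPicardLindelof (fun t x => σ * c (u (t, x)))
      (⟨t₁, ⟨ht₁.1, le_refl _⟩⟩ : Set.Icc 0 t₁) x₁ ρN 0 cN L := by
    constructor
    · intro t ht
      rw [lipschitzOnWith_iff_dist_le_mul]
      intro x hx y hy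
      have h1 : dist (σ * c (u (t, x))) (σ * c (u (t, y))) = dist (F (t, x)) (F (t, y)) := by
        simp only [dist_eq, ← mul_sub, abs_mul, hσ1, one_mul, hF]
      rw [h1]
      have hx' : (t, x) ∈ Q := ⟨⟨ht.1, le_trans ht.2 ht₁.2⟩, hx⟩
      have hy' : (t, y) ∈ Q := ⟨⟨ht.1, le_trans ht.2 ht₁.2⟩, hy⟩
      have := (lipschitzOnWith_iff_dist_le_mul.mp hFlip) _ hx' _ hy'
      refine le_trans this ?_
      have h2 : dist ((t, x) : ℝ × ℝ) (t, y) = dist x y := by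
        simp [Prod.dist_eq, dist_nonneg]
      rw [h2]
    · intro x hx
      exact (continuous_const.mul (hc.continuous.comp
        (hu.continuous.comp (continuous_id.prodMk continuous_const)))).continuousOn
    · intro t ht x hx
      have := (hcbd (u (t, x)))
      rw [Real.norm_eq_abs, abs_mul, hσ1, one_mul, abs_of_pos (lt_of_lt_of_le hclow this.1)]
      exact this.2
    · have : max (t₁ - t₁) (t₁ - 0) = t₁ := by
        rw [sub_self, sub_zero]
        exact max_eq_right ht₁.1
      show chigh * max (t₁ - t₁) (t₁ - 0) ≤ ρ - 0
      rw [this, sub_zero]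
      nlinarith [ht₁.2, ht₁.1, hch0.le]
  obtain ⟨γ, hγ0, hγ⟩ := hpl.exists_eq_forall_mem_Icc_hasDerivWithinAt₀
  exact ⟨γ, hγ0, hγ⟩

/-- Generic upper bound for the Riemann variable `W σ` via weighted monotonicity along
characteristics. -/
lemma W_upper_bound {c : ℝ → ℝ} {u : ℝ × ℝ → ℝ} {clow chigh T : ℝ}
    (hc : ContDiff ℝ 1 c) (hu : ContDiff ℝ 2 u) (hclow : 0 < clow)
    (hcbd : ∀ θ, clow ≤ c θ ∧ c θ ≤ chigh) (hcmono : ∀ θ, 0 ≤ deriv c θ) (hT : 0 < T)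
    (hwave : ∀ p : ℝ × ℝ, p.1 ∈ Set.Icc 0 T →
      pdt (pdt u) p = (c (u p)) ^ 2 * pdx (pdx u) p)
    (σ : ℝ) (hσ : σ * σ = 1) (M : ℝ) (hM0 : 0 ≤ M)
    (hMinit : ∀ z, W σ c u (0, z) ≤ M)
    {t₁ : ℝ} (ht₁ : t₁ ∈ Set.Icc 0 T) (x₁ : ℝ) :
    W σ c u (t₁, x₁) ≤ Real.sqrt (chigh / clow) * M := by
  have hcpos : ∀ θ, 0 < c θ := fun θ => lt_of_lt_of_le hclow (hcbd θ).1
  obtain ⟨γ, hγ1, hγ⟩ := exists_char hc hu hclow hcbd hT σ hσ ht₁ x₁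
  set I : Set ℝ := Set.Icc 0 t₁ with hI
  set X : ℝ → ℝ := fun s => W σ c u (s, γ s) with hX
  set k : ℝ → ℝ := fun s => c (u (s, γ s)) with hk
  set w : ℝ → ℝ := fun s => X s / Real.sqrt (k s) with hw
  have hkpos : ∀ s, 0 < k s := fun s => hcpos _
  have hrpos : ∀ s, 0 < Real.sqrt (k s) := fun s => Real.sqrt_pos.mpr (hkpos s)
  -- derivative of w at each point of I
  have hwderiv : ∀ s ∈ I, HasDerivWithinAt w
      (-(deriv c (u (s, γ s)) * (W (-σ) c u (s, γ s)) ^ 2) / (2 * Real.sqrt (k s) * k s)) I s := by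
    intro s hs
    have hsT : s ∈ Set.Icc 0 T := ⟨hs.1, le_trans hs.2 ht₁.2⟩
    have hXd := hasDerivWithinAt_W_along hc hu hcpos hσ (hγ s hs) (hwave (s, γ s) hsT)
    have hkd := hasDerivWithinAt_cu_along hc hu (σ := σ) (hγ s hs)
    have hsqd : HasDerivWithinAt (fun t => Real.sqrt (k t))
        (1 / (2 * Real.sqrt (k s)) * (deriv c (u (s, γ s)) * W (-σ) c u (s, γ s))) I s :=
      (Real.hasDerivAt_sqrt (ne_of_gt (hkpos s))).comp_hasDerivWithinAt s hkd
    have hdiv := hXd.div hsqd (ne_of_gt (hrpos s))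
    have hval : (deriv c (u (s, γ s)) / (2 * c (u (s, γ s))) * W (-σ) c u (s, γ s) *
          (W σ c u (s, γ s) - W (-σ) c u (s, γ s)) * Real.sqrt (k s) -
          W σ c u (s, γ s) * (1 / (2 * Real.sqrt (k s)) *
            (deriv c (u (s, γ s)) * W (-σ) c u (s, γ s)))) / (Real.sqrt (k s)) ^ 2
        = -(deriv c (u (s, γ s)) * (W (-σ) c u (s, γ s)) ^ 2) / (2 * Real.sqrt (k s) * k s) := by
      have hr2 : (Real.sqrt (k s)) ^ 2 = k s := Real.sq_sqrt (hkpos s).le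
      have hrne : Real.sqrt (k s) ≠ 0 := ne_of_gt (hrpos s)
      have hkne : k s ≠ 0 := ne_of_gt (hkpos s)
      have hkc : c (u (s, γ s)) = k s := rfl
      rw [hkc]
      field_simp
      linear_combination (deriv c (u (s, γ s)) * W σ c u (s, γ s) * W (-σ) c u (s, γ s)) * hr2
    rw [hval] at hdiv
    exact hdiv
  -- w is antitone on I
  have hant : AntitoneOn w I := by
    apply antitoneOn_of_deriv_nonpos (convex_Icc 0 t₁)
    · exact fun s hs => (hwderiv s hs).continuousWithinAt
    · intro s hs
      rw [interior_Icc] at hs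
      exact ((hwderiv s ⟨hs.1.le, hs.2.le⟩).hasDerivAt
        (Icc_mem_nhds hs.1 hs.2)).differentiableAt.differentiableWithinAt
    · intro s hs
      rw [interior_Icc] at hs
      have hd := (hwderiv s ⟨hs.1.le, hs.2.le⟩).hasDerivAt (Icc_mem_nhds hs.1 hs.2)
      rw [hd.deriv]
      apply div_nonpos_of_nonpos_of_nonneg
      · simp only [neg_nonpos]
        exact mul_nonneg (hcmono _) (sq_nonneg _)
      · exact le_of_lt (mul_pos (mul_pos two_pos (hrpos s)) (hkpos s))
  have h0I : (0 : ℝ) ∈ I := ⟨le_refl 0, ht₁.1⟩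
  have ht₁I : t₁ ∈ I := ⟨ht₁.1, le_refl t₁⟩
  have hmono : w t₁ ≤ w 0 := hant h0I ht₁I ht₁.1
  -- bound w 0
  have hw0 : w 0 ≤ M / Real.sqrt clow := by
    rcases le_or_gt (X 0) 0 with h | h
    · have : w 0 ≤ 0 := div_nonpos_of_nonpos_of_nonneg h (Real.sqrt_nonneg _)
      exact le_trans this (by positivity)
    · have h1 : X 0 ≤ M := hMinit (γ 0)
      have h2 : Real.sqrt clow ≤ Real.sqrt (k 0) := Real.sqrt_le_sqrt (hcbd _).1
      calc w 0 = X 0 / Real.sqrt (k 0) := rfl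
        _ ≤ M / Real.sqrt clow :=
            div_le_div₀ hM0 h1 (Real.sqrt_pos.mpr hclow) h2
  -- conclude
  have hXt : X t₁ = w t₁ * Real.sqrt (k t₁) := by
    show X t₁ = X t₁ / Real.sqrt (k t₁) * Real.sqrt (k t₁)
    rw [div_mul_cancel₀ _ (ne_of_gt (hrpos t₁))]
  have hklh : Real.sqrt (k t₁) ≤ Real.sqrt chigh := Real.sqrt_le_sqrt (hcbd _).2
  have : X t₁ ≤ (M / Real.sqrt clow) * Real.sqrt chigh := by
    rw [hXt]
    calc w t₁ * Real.sqrt (k t₁) ≤ (M / Real.sqrt clow) * Real.sqrt (k t₁) :=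
          mul_le_mul_of_nonneg_right (le_trans hmono hw0) (Real.sqrt_nonneg _)
      _ ≤ (M / Real.sqrt clow) * Real.sqrt chigh :=
          mul_le_mul_of_nonneg_left hklh (by positivity)
  have heq : (M / Real.sqrt clow) * Real.sqrt chigh = Real.sqrt (chigh / clow) * M := by
    have hch0 : (0:ℝ) ≤ chigh :=
      le_trans hclow.le (le_trans (hcbd 0).1 (hcbd 0).2)
    rw [Real.sqrt_div hch0 clow]
    ring
  have hfin : W σ c u (t₁, x₁) = X t₁ := by rw [hX]; simp [hγ1]
  rw [hfin, ← heq]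
  exact this

/-- The comparison function for the lower bound. -/
noncomputable def psiF (P m₀ A ε : ℝ) : ℝ → ℝ :=
  fun t => P + (m₀ - P - ε) * Real.exp ((A * P + ε) * t)

lemma psiF_hasDerivAt (P m₀ A ε t : ℝ) :
    HasDerivAt (psiF P m₀ A ε) ((A * P + ε) * (psiF P m₀ A ε t - P)) t := by
  have h1 : HasDerivAt (fun t : ℝ => (A * P + ε) * t) (A * P + ε) t := by
    simpa using (hasDerivAt_id t).const_mul (A * P + ε)
  have h2 := (Real.hasDerivAt_exp ((A * P + ε) * t)).comp t h1
  have h3 := (h2.const_mul (m₀ - P - ε)).const_add P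
  refine h3.congr_deriv ?_
  simp [psiF]
  ring

lemma psiF_le (P m₀ A ε : ℝ) (hP0 : 0 ≤ P) (hm₀ : m₀ ≤ 0) (hε : 0 < ε) (hA0 : 0 ≤ A)
    {t : ℝ} (ht : 0 ≤ t) : psiF P m₀ A ε t ≤ -ε := by
  have h1 : (1:ℝ) ≤ Real.exp ((A * P + ε) * t) := by
    rw [Real.one_le_exp_iff]
    positivity
  have h2 : m₀ - P - ε < 0 := by linarith
  show P + (m₀ - P - ε) * Real.exp ((A * P + ε) * t) ≤ -ε
  nlinarith [mul_nonneg (by linarith : (0:ℝ) ≤ P + ε - m₀)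
    (by linarith : (0:ℝ) ≤ Real.exp ((A * P + ε) * t) - 1)]

/-- No touching from below can occur at a positive time. -/
lemma no_touch {c : ℝ → ℝ} {u : ℝ × ℝ → ℝ} {clow chigh T : ℝ}
    (hc : ContDiff ℝ 1 c) (hu : ContDiff ℝ 2 u) (hclow : 0 < clow)
    (hcbd : ∀ θ, clow ≤ c θ ∧ c θ ≤ chigh) (hcmono : ∀ θ, 0 ≤ deriv c θ) (hT : 0 < T)
    (hwave : ∀ p : ℝ × ℝ, p.1 ∈ Set.Icc 0 T →
      pdt (pdt u) p = (c (u p)) ^ 2 * pdx (pdx u) p)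
    {A P ε m₀ : ℝ} (hA0 : 0 ≤ A) (haA : ∀ θ, deriv c θ / (2 * c θ) ≤ A)
    (hP0 : 0 ≤ P) (hm₀ : m₀ ≤ 0) (hε : 0 < ε)
    (σ : ℝ) (hσ : σ * σ = 1) {tstar xstar : ℝ} (htT : tstar ∈ Set.Icc 0 T) (h0t : 0 < tstar)
    (hupper : ∀ t ∈ Set.Icc 0 T, ∀ x : ℝ, W (-σ) c u (t, x) ≤ P)
    (hlowSelf : ∀ s ∈ Set.Icc 0 tstar, ∀ x : ℝ, psiF P m₀ A ε s ≤ W σ c u (s, x))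
    (hlowOther : ∀ s ∈ Set.Icc 0 tstar, ∀ x : ℝ, psiF P m₀ A ε s ≤ W (-σ) c u (s, x))
    (htouch : W σ c u (tstar, xstar) = psiF P m₀ A ε tstar) : False := by
  have hcpos : ∀ θ, 0 < c θ := fun θ => lt_of_lt_of_le hclow (hcbd θ).1
  set ψ := psiF P m₀ A ε with hψ
  obtain ⟨γ, hγ1, hγ⟩ := exists_char hc hu hclow hcbd hT σ hσ htT xstar
  set I : Set ℝ := Set.Icc 0 tstar with hI
  set g₁ : ℝ → ℝ := fun s => W σ c u (s, γ s) - ψ s with hg₁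
  -- derivative of the transported variable at tstar
  have htsI : tstar ∈ I := ⟨htT.1, le_refl _⟩
  have hXd := hasDerivWithinAt_W_along hc hu hcpos hσ (hγ tstar htsI) (hwave (tstar, γ tstar) htT)
  set θ₀ := u (tstar, γ tstar) with hθ₀
  set a : ℝ := deriv c θ₀ / (2 * c θ₀) with ha
  set Y : ℝ := W (-σ) c u (tstar, γ tstar) with hY
  set q : ℝ := ψ tstar with hq
  have hXval : W σ c u (tstar, γ tstar) = q := by rw [hγ1, htouch]
  -- derivative of g₁
  have hg₁d : HasDerivWithinAt g₁ (a * Y * (q - Y) - (A * P + ε) * (q - P)) I tstar := by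
    have := hXd.sub ((psiF_hasDerivAt P m₀ A ε tstar).hasDerivWithinAt (s := I))
    rw [hXval] at this
    exact this
  -- the derivative is strictly positive
  have ha0 : 0 ≤ a := div_nonneg (hcmono θ₀) (by linarith [hcpos θ₀])
  have haA' : a ≤ A := haA θ₀
  have hqneg : q ≤ -ε := psiF_le P m₀ A ε hP0 hm₀ hε hA0 htT.1
  have hYub : Y ≤ P := hupper tstar htT (γ tstar)
  have hYlb : q ≤ Y := hlowOther tstar htsI (γ tstar)
  have claim1 : P * (q - P) ≤ Y * (q - Y) := by nlinarith [sq_nonneg (P - Y)]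
  have hd_lb : A * (P * (q - P)) ≤ a * (Y * (q - Y)) := by
    rcases le_or_gt 0 (Y * (q - Y)) with hv | hv
    · have h1 : A * (P * (q - P)) ≤ 0 :=
        mul_nonpos_of_nonneg_of_nonpos hA0 (mul_nonpos_of_nonneg_of_nonpos hP0 (by linarith))
      nlinarith
    · have h1 : A * (P * (q - P)) ≤ A * (Y * (q - Y)) := by
        exact mul_le_mul_of_nonneg_left claim1 hA0
      have h2 : A * (Y * (q - Y)) ≤ a * (Y * (q - Y)) := by nlinarith
      linarith
  have hDpos : 0 < a * Y * (q - Y) - (A * P + ε) * (q - P) := by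
    have h3 : a * Y * (q - Y) = a * (Y * (q - Y)) := by ring
    have h4 : ε * (P - q) ≥ ε * ε := by nlinarith
    nlinarith
  -- g₁ is nonneg on I, zero at tstar, with positive derivative: contradiction
  have hg₁nonneg : ∀ s ∈ I, 0 ≤ g₁ s := fun s hs => by
    have := hlowSelf s hs (γ s); simp only [hg₁]; linarith
  have hg₁ts : g₁ tstar = 0 := by simp only [hg₁, hXval, hq, sub_self]
  -- use slope limit
  have hslope := hasDerivWithinAt_iff_tendsto_slope.mp hg₁d
  have hIco : Set.Ico 0 tstar ⊆ I \ {tstar} := fun s hs =>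
    ⟨⟨hs.1, hs.2.le⟩, by simp only [Set.mem_singleton_iff]; exact ne_of_lt hs.2⟩
  have hmono : 𝓝[Set.Ico 0 tstar] tstar ≤ 𝓝[I \ {tstar}] tstar := nhdsWithin_mono _ hIco
  have hNB : (𝓝[Set.Ico 0 tstar] tstar).NeBot := by
    rw [← mem_closure_iff_nhdsWithin_neBot, closure_Ico (ne_of_lt h0t)]
    exact ⟨htT.1, le_refl _⟩
  have hslope' := hslope.mono_left hmono
  have hev := hslope'.eventually (lt_mem_nhds hDpos)
  obtain ⟨s, hsl, hsm⟩ := (hev.and self_mem_nhdsWithin).exists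
  -- slope is nonpositive: contradiction
  have hs1 : s - tstar < 0 := sub_neg.mpr hsm.2
  have : slope g₁ tstar s ≤ 0 := by
    rw [slope_def_field]
    rw [hg₁ts]
    have h5 : 0 ≤ g₁ s := hg₁nonneg s ⟨hsm.1, hsm.2.le⟩
    have : (g₁ s - 0) / (s - tstar) ≤ 0 :=
      div_nonpos_of_nonneg_of_nonpos (by linarith) hs1.le
    simpa [div_eq_iff] using this
  linarith [hsl, this]

lemma continuous_pdt {u : ℝ × ℝ → ℝ} (hu : ContDiff ℝ 2 u) : Continuous (pdt u) := by
  have h : pdt u = fun p => (ContinuousLinearMap.apply ℝ ℝ ((1:ℝ), (0:ℝ))) (fderiv ℝ u p) :=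
    funext (pdt_eq hu)
  rw [h]
  exact (ContinuousLinearMap.apply ℝ ℝ ((1:ℝ), (0:ℝ))).continuous.comp
    (hu.fderiv_right (m := 1) (by norm_num)).continuous

lemma continuous_pdx {u : ℝ × ℝ → ℝ} (hu : ContDiff ℝ 2 u) : Continuous (pdx u) := by
  have h : pdx u = fun p => (ContinuousLinearMap.apply ℝ ℝ ((0:ℝ), (1:ℝ))) (fderiv ℝ u p) :=
    funext (pdx_eq hu)
  rw [h]
  exact (ContinuousLinearMap.apply ℝ ℝ ((0:ℝ), (1:ℝ))).continuous.comp
    (hu.fderiv_right (m := 1) (by norm_num)).continuous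

lemma continuous_Rv {c : ℝ → ℝ} {u : ℝ × ℝ → ℝ} (hc : ContDiff ℝ 1 c) (hu : ContDiff ℝ 2 u) :
    Continuous (Rv c u) :=
  (continuous_pdt hu).add ((hc.continuous.comp hu.continuous).mul (continuous_pdx hu))

lemma continuous_Sv {c : ℝ → ℝ} {u : ℝ × ℝ → ℝ} (hc : ContDiff ℝ 1 c) (hu : ContDiff ℝ 2 u) :
    Continuous (Sv c u) :=
  (continuous_pdt hu).sub ((hc.continuous.comp hu.continuous).mul (continuous_pdx hu))

lemma continuous_psiF (P m₀ A ε : ℝ) : Continuous (psiF P m₀ A ε) := by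
  unfold psiF; fun_prop

/-- The ε-strict lower bound on the whole strip. -/
lemma lower_bound_eps {c : ℝ → ℝ} {u : ℝ × ℝ → ℝ} {clow chigh T : ℝ}
    (hc : ContDiff ℝ 1 c) (hu : ContDiff ℝ 2 u) (hclow : 0 < clow)
    (hcbd : ∀ θ, clow ≤ c θ ∧ c θ ≤ chigh) (hcmono : ∀ θ, 0 ≤ deriv c θ) (hT : 0 < T)
    (hwave : ∀ p : ℝ × ℝ, p.1 ∈ Set.Icc 0 T →
      pdt (pdt u) p = (c (u p)) ^ 2 * pdx (pdx u) p)
    (hdecay : ∀ ε > (0 : ℝ), ∃ K : ℝ, ∀ x : ℝ, K ≤ |x| →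
      ∀ t ∈ Set.Icc 0 T, |Rv c u (t, x)| < ε ∧ |Sv c u (t, x)| < ε)
    {A P m₀ : ℝ} (hA0 : 0 ≤ A) (haA : ∀ θ, deriv c θ / (2 * c θ) ≤ A)
    (hP0 : 0 ≤ P) (hm₀ : m₀ ≤ 0)
    (hupR : ∀ t ∈ Set.Icc 0 T, ∀ x : ℝ, Rv c u (t, x) ≤ P)
    (hupS : ∀ t ∈ Set.Icc 0 T, ∀ x : ℝ, Sv c u (t, x) ≤ P)
    (hinit : ∀ x : ℝ, m₀ ≤ Rv c u (0, x) ∧ m₀ ≤ Sv c u (0, x))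
    {ε : ℝ} (hε : 0 < ε) :
    ∀ t ∈ Set.Icc 0 T, ∀ x : ℝ,
      psiF P m₀ A ε t ≤ Rv c u (t, x) ∧ psiF P m₀ A ε t ≤ Sv c u (t, x) := by
  have hWR : W (-1 : ℝ) c u = Rv c u := W_neg_one c u
  have hWS : W (1 : ℝ) c u = Sv c u := W_one c u
  set ψ := psiF P m₀ A ε with hψdef
  have hψc : Continuous ψ := continuous_psiF P m₀ A ε
  have hRc : Continuous (Rv c u) := continuous_Rv hc hu
  have hSc : Continuous (Sv c u) := continuous_Sv hc hu
  have hψ0 : ψ 0 = m₀ - ε := by simp [hψdef, psiF]; ring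
  have hψle : ∀ {s : ℝ}, 0 ≤ s → ψ s ≤ -ε := fun hs => psiF_le P m₀ A ε hP0 hm₀ hε hA0 hs
  obtain ⟨K, hK⟩ := hdecay ε hε
  set K₀ : ℝ := max K 0 with hK₀
  set E : Set ℝ := {t | t ∈ Set.Icc 0 T ∧ ∀ s ∈ Set.Icc 0 t, ∀ x : ℝ,
    ψ s ≤ Rv c u (s, x) ∧ ψ s ≤ Sv c u (s, x)} with hE
  have h0E : (0 : ℝ) ∈ E := by
    refine ⟨⟨le_refl 0, hT.le⟩, ?_⟩
    intro s hs x
    have hs0 : s = 0 := le_antisymm hs.2 hs.1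
    subst hs0
    have h := hinit x
    rw [hψ0]
    exact ⟨by linarith [h.1], by linarith [h.2]⟩
  have hEbdd : BddAbove E := ⟨T, fun t ht => ht.1.2⟩
  have hEne : E.Nonempty := ⟨0, h0E⟩
  set ts : ℝ := sSup E with hts
  have h0ts : 0 ≤ ts := le_csSup hEbdd h0E
  have htsT : ts ≤ T := csSup_le hEne fun t ht => ht.1.2
  have hbelow : ∀ s, 0 ≤ s → s < ts → ∀ x : ℝ,
      ψ s ≤ Rv c u (s, x) ∧ ψ s ≤ Sv c u (s, x) := by
    intro s hs0 hst x
    obtain ⟨t, htE, hst'⟩ := exists_lt_of_lt_csSup hEne hst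
    exact htE.2 s ⟨hs0, hst'.le⟩ x
  -- the bound holds at time ts as well, by continuity
  have hstar : ∀ x : ℝ, ψ ts ≤ Rv c u (ts, x) ∧ ψ ts ≤ Sv c u (ts, x) := by
    intro x
    rcases eq_or_lt_of_le h0ts with h | h
    · rw [← h, hψ0]
      have h := hinit x
      exact ⟨by linarith [h.1], by linarith [h.2]⟩
    · have key : ∀ f : ℝ × ℝ → ℝ, Continuous f →
          (∀ s, 0 ≤ s → s < ts → ψ s ≤ f (s, x)) → ψ ts ≤ f (ts, x) := by
        intro f hf hlow
        have hNB : (𝓝[Set.Ioo 0 ts] ts).NeBot := by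
          rw [← mem_closure_iff_nhdsWithin_neBot, closure_Ioo (ne_of_lt h)]
          exact ⟨h.le, le_refl _⟩
        have hcont : Tendsto (fun s => f (s, x) - ψ s) (𝓝[Set.Ioo 0 ts] ts)
            (𝓝 (f (ts, x) - ψ ts)) := by
          have : Continuous fun s : ℝ => f (s, x) - ψ s :=
            (hf.comp (continuous_id.prodMk continuous_const)).sub hψc
          exact (this.tendsto ts).mono_left nhdsWithin_le_nhds
        have hev : ∀ᶠ s in 𝓝[Set.Ioo 0 ts] ts, 0 ≤ f (s, x) - ψ s := by
          filter_upwards [self_mem_nhdsWithin] with s hs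
          have := hlow s hs.1.le hs.2
          linarith
        have h0 := ge_of_tendsto hcont hev
        linarith
      constructor
      · exact key _ hRc fun s hs0 hst => (hbelow s hs0 hst x).1
      · exact key _ hSc fun s hs0 hst => (hbelow s hs0 hst x).2
  have htsE : ts ∈ E := by
    refine ⟨⟨h0ts, htsT⟩, ?_⟩
    intro s hs x
    rcases lt_or_eq_of_le hs.2 with h | h
    · exact hbelow s hs.1 h x
    · rw [h]; exact hstar x
  -- main dichotomy
  rcases eq_or_lt_of_le htsT with hTt | htlt
  · intro t ht x
    exact htsE.2 t (by rw [hTt]; exact ht) x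
  · exfalso
    by_cases htouch : ∃ x, Rv c u (ts, x) = ψ ts ∨ Sv c u (ts, x) = ψ ts
    · obtain ⟨xs, hxs⟩ := htouch
      have h0 : 0 < ts := by
        rcases eq_or_lt_of_le h0ts with h | h
        · exfalso
          have h1 := hinit xs
          rw [← h, hψ0] at hxs
          rcases hxs with h2 | h2 <;> linarith [h1.1, h1.2, hε]
        · exact h
      have hup1 : ∀ t ∈ Set.Icc 0 T, ∀ x : ℝ, W (-(-1) : ℝ) c u (t, x) ≤ P := by
        intro t ht x
        rw [show (-(-1) : ℝ) = 1 by norm_num, hWS]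
        exact hupS t ht x
      have hup2 : ∀ t ∈ Set.Icc 0 T, ∀ x : ℝ, W (-(1) : ℝ) c u (t, x) ≤ P := by
        intro t ht x
        rw [hWR]
        exact hupR t ht x
      rcases hxs with h2 | h2
      · refine no_touch hc hu hclow hcbd hcmono hT hwave hA0 haA hP0 hm₀ hε
          (-1 : ℝ) (by norm_num) ⟨h0ts, htsT⟩ h0 hup1 ?_ ?_ (by rw [hWR]; exact h2)
        · intro s hs x; rw [hWR]; exact (htsE.2 s hs x).1
        · intro s hs x
          rw [show (-(-1) : ℝ) = 1 by norm_num, hWS]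
          exact (htsE.2 s hs x).2
      · refine no_touch hc hu hclow hcbd hcmono hT hwave hA0 haA hP0 hm₀ hε
          (1 : ℝ) (by norm_num) ⟨h0ts, htsT⟩ h0 hup2 ?_ ?_ (by rw [hWS]; exact h2)
        · intro s hs x; rw [hWS]; exact (htsE.2 s hs x).2
        · intro s hs x; rw [hWR]; exact (htsE.2 s hs x).1
    · push_neg at htouch
      set g : ℝ × ℝ → ℝ := fun p => min (Rv c u p) (Sv c u p) - ψ p.1 with hg
      have hgc : Continuous g := (hRc.min hSc).sub (hψc.comp continuous_fst)
      have hgpos : ∀ x : ℝ, 0 < g (ts, x) := by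
        intro x
        have h1 := hstar x
        have h2 := htouch x
        simp only [hg, lt_min_iff, sub_pos]
        rcases lt_or_eq_of_le h1.1 with h | h
        · rcases lt_or_eq_of_le h1.2 with h' | h'
          · exact ⟨h, h'⟩
          · exact absurd h'.symm h2.2
        · exact absurd h.symm h2.1
      have hsub : ({ts} : Set ℝ) ×ˢ Set.Icc (-K₀) K₀ ⊆ g ⁻¹' Set.Ioi 0 := by
        rintro ⟨t, x⟩ ⟨ht, _⟩
        rw [Set.mem_singleton_iff] at ht
        subst ht
        exact hgpos x
      obtain ⟨v1, v2, hv1, _, hm1, hm2, hsub'⟩ :=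
        generalized_tube_lemma isCompact_singleton isCompact_Icc
          (hgc.isOpen_preimage _ isOpen_Ioi) hsub
      obtain ⟨δ, hδ0, hball⟩ := Metric.isOpen_iff.mp hv1 ts (hm1 rfl)
      set t2 : ℝ := min T (ts + δ / 2) with ht2
      have ht2E : t2 ∈ E := by
        refine ⟨⟨le_min (by linarith) (by linarith), min_le_left _ _⟩, ?_⟩
        intro s hs x
        rcases le_or_gt s ts with hsts | hsts
        · exact htsE.2 s ⟨hs.1, hsts⟩ x
        · have hsT : s ∈ Set.Icc 0 T := ⟨hs.1, le_trans hs.2 (min_le_left _ _)⟩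
          by_cases hx : x ∈ Set.Icc (-K₀) K₀
          · have hsv1 : s ∈ v1 := by
              apply hball
              rw [Metric.mem_ball, Real.dist_eq, abs_of_pos (by linarith)]
              have := le_trans hs.2 (min_le_right _ _)
              linarith
            have : g (s, x) > 0 := hsub' ⟨hsv1, hm2 hx⟩
            simp only [hg, lt_min_iff, sub_pos] at this
            exact ⟨this.1.le, this.2.le⟩
          · have hxK : K ≤ |x| := by
              simp only [Set.mem_Icc, not_and_or, not_le] at hx
              rcases hx with h | h
              · have : K₀ < -x := by linarith
                have : K₀ ≤ |x| := le_trans this.le (neg_le_abs x)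
                linarith [le_max_left K 0, this]
              · have : K₀ ≤ |x| := le_trans h.le (le_abs_self x)
                linarith [le_max_left K 0, this]
            have hd := hK x hxK s hsT
            have hψs := hψle hs.1
            constructor
            · have := abs_lt.mp hd.1
              linarith [this.1]
            · have := abs_lt.mp hd.2
              linarith [this.1]
      have : t2 ≤ ts := le_csSup hEbdd ht2E
      have : ts < t2 := lt_min htlt (by linarith)
      linarith

theorem stmt13 (c : ℝ → ℝ) (u : ℝ × ℝ → ℝ) (clow chigh T : ℝ)
    (hc : ContDiff ℝ 1 c)
    (hclow : 0 < clow)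
    (hcbd : ∀ θ, clow ≤ c θ ∧ c θ ≤ chigh)
    (hcmono : ∀ θ, 0 ≤ deriv c θ)
    (hA : BddAbove (Set.range fun θ : ℝ => deriv c θ / (2 * c θ)))
    (hT : 0 < T)
    (hu : ContDiff ℝ 2 u)
    (hwave : ∀ p : ℝ × ℝ, p.1 ∈ Set.Icc 0 T →
      pdt (pdt u) p = (c (u p)) ^ 2 * pdx (pdx u) p)
    (hdecay : ∀ ε > (0 : ℝ), ∃ K : ℝ, ∀ x : ℝ, K ≤ |x| →
      ∀ t ∈ Set.Icc 0 T, |Rv c u (t, x)| < ε ∧ |Sv c u (t, x)| < ε)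
    (hPR : BddAbove (Set.range fun x : ℝ => max (Rv c u (0, x)) 0))
    (hPS : BddAbove (Set.range fun x : ℝ => max (Sv c u (0, x)) 0))
    (hm0R : BddBelow (Set.range fun x : ℝ => Rv c u (0, x)))
    (hm0S : BddBelow (Set.range fun x : ℝ => Sv c u (0, x))) :
    ∀ t ∈ Set.Icc 0 T, ∀ x : ℝ,
      (Real.sqrt (chigh / clow) *
          max (⨆ z : ℝ, max (Rv c u (0, z)) 0) (⨆ z : ℝ, max (Sv c u (0, z)) 0)
        + (min 0 (min (⨅ z : ℝ, Rv c u (0, z)) (⨅ z : ℝ, Sv c u (0, z)))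
            - Real.sqrt (chigh / clow) *
              max (⨆ z : ℝ, max (Rv c u (0, z)) 0) (⨆ z : ℝ, max (Sv c u (0, z)) 0)) *
          Real.exp ((⨆ θ : ℝ, deriv c θ / (2 * c θ)) *
            (Real.sqrt (chigh / clow) *
              max (⨆ z : ℝ, max (Rv c u (0, z)) 0) (⨆ z : ℝ, max (Sv c u (0, z)) 0)) * T)
        ≤ Rv c u (t, x) ∧
        Rv c u (t, x) ≤ Real.sqrt (chigh / clow) *
          max (⨆ z : ℝ, max (Rv c u (0, z)) 0) (⨆ z : ℝ, max (Sv c u (0, z)) 0)) ∧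
      (Real.sqrt (chigh / clow) *
          max (⨆ z : ℝ, max (Rv c u (0, z)) 0) (⨆ z : ℝ, max (Sv c u (0, z)) 0)
        + (min 0 (min (⨅ z : ℝ, Rv c u (0, z)) (⨅ z : ℝ, Sv c u (0, z)))
            - Real.sqrt (chigh / clow) *
              max (⨆ z : ℝ, max (Rv c u (0, z)) 0) (⨆ z : ℝ, max (Sv c u (0, z)) 0)) *
          Real.exp ((⨆ θ : ℝ, deriv c θ / (2 * c θ)) *
            (Real.sqrt (chigh / clow) *
              max (⨆ z : ℝ, max (Rv c u (0, z)) 0) (⨆ z : ℝ, max (Sv c u (0, z)) 0)) * T)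
        ≤ Sv c u (t, x) ∧
        Sv c u (t, x) ≤ Real.sqrt (chigh / clow) *
          max (⨆ z : ℝ, max (Rv c u (0, z)) 0) (⨆ z : ℝ, max (Sv c u (0, z)) 0)) := by
  intro t ht x
  have hcpos : ∀ θ, 0 < c θ := fun θ => lt_of_lt_of_le hclow (hcbd θ).1
  set MR : ℝ := ⨆ z : ℝ, max (Rv c u (0, z)) 0 with hMR
  set MS : ℝ := ⨆ z : ℝ, max (Sv c u (0, z)) 0 with hMS
  set iR : ℝ := ⨅ z : ℝ, Rv c u (0, z) with hiR
  set iS : ℝ := ⨅ z : ℝ, Sv c u (0, z) with hiS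
  set A : ℝ := ⨆ θ : ℝ, deriv c θ / (2 * c θ) with hAdef
  set m₀ : ℝ := min 0 (min iR iS) with hm₀def
  set P : ℝ := Real.sqrt (chigh / clow) * max MR MS with hPdef
  have hMR0 : (0:ℝ) ≤ MR := le_trans (le_max_right (Rv c u (0,0)) 0) (le_ciSup hPR 0)
  have hMS0 : (0:ℝ) ≤ MS := le_trans (le_max_right (Sv c u (0,0)) 0) (le_ciSup hPS 0)
  have hM0 : (0:ℝ) ≤ max MR MS := le_trans hMR0 (le_max_left _ _)
  have hP0 : (0:ℝ) ≤ P := mul_nonneg (Real.sqrt_nonneg _) hM0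
  have hsq1 : (1:ℝ) ≤ Real.sqrt (chigh / clow) := by
    rw [show (1:ℝ) = Real.sqrt 1 by rw [Real.sqrt_one]]
    apply Real.sqrt_le_sqrt
    rw [le_div_iff₀ hclow]
    simpa using le_trans (hcbd 0).1 (hcbd 0).2
  have hMup : max MR MS ≤ P := by
    calc max MR MS = 1 * max MR MS := (one_mul _).symm
      _ ≤ Real.sqrt (chigh / clow) * max MR MS := mul_le_mul_of_nonneg_right hsq1 hM0
  have hupR : ∀ t' ∈ Set.Icc (0:ℝ) T, ∀ x' : ℝ, Rv c u (t', x') ≤ P := by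
    intro t' ht' x'
    have h := W_upper_bound hc hu hclow hcbd hcmono hT hwave (-1) (by norm_num)
      (max MR MS) hM0 ?_ ht' x'
    · rw [W_neg_one] at h; exact h
    · intro z
      rw [W_neg_one]
      exact le_trans (le_trans (le_max_left _ 0) (le_ciSup hPR z)) (le_max_left _ _)
  have hupS : ∀ t' ∈ Set.Icc (0:ℝ) T, ∀ x' : ℝ, Sv c u (t', x') ≤ P := by
    intro t' ht' x'
    have h := W_upper_bound hc hu hclow hcbd hcmono hT hwave 1 (by norm_num)
      (max MR MS) hM0 ?_ ht' x'
    · rw [W_one] at h; exact h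
    · intro z
      rw [W_one]
      exact le_trans (le_trans (le_max_left _ 0) (le_ciSup hPS z)) (le_max_right _ _)
  have haA : ∀ θ, deriv c θ / (2 * c θ) ≤ A := fun θ => le_ciSup hA θ
  have hA0 : (0:ℝ) ≤ A :=
    le_trans (div_nonneg (hcmono 0) (by linarith [hcpos 0])) (haA 0)
  have hm₀0 : m₀ ≤ 0 := min_le_left _ _
  have hinitm : ∀ x' : ℝ, m₀ ≤ Rv c u (0, x') ∧ m₀ ≤ Sv c u (0, x') := by
    intro x'
    constructor
    · exact le_trans (le_trans (min_le_right _ _) (min_le_left iR iS)) (ciInf_le hm0R x')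
    · exact le_trans (le_trans (min_le_right _ _) (min_le_right iR iS)) (ciInf_le hm0S x')
  have hlow : ∀ ε : ℝ, 0 < ε →
      psiF P m₀ A ε t ≤ Rv c u (t, x) ∧ psiF P m₀ A ε t ≤ Sv c u (t, x) := by
    intro ε hε
    exact lower_bound_eps hc hu hclow hcbd hcmono hT hwave hdecay hA0 haA hP0 hm₀0
      hupR hupS hinitm hε t ht x
  -- pass to the limit ε → 0⁺
  have hcontε : Continuous (fun ε : ℝ => P + (m₀ - P - ε) * Real.exp ((A * P + ε) * t)) := by
    fun_prop
  have htend : Tendsto (fun ε : ℝ => psiF P m₀ A ε t) (𝓝[>] (0:ℝ))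
      (𝓝 (P + (m₀ - P) * Real.exp (A * P * t))) := by
    have h1 := (hcontε.tendsto 0).mono_left (nhdsWithin_le_nhds (s := Set.Ioi (0:ℝ)))
    simpa [psiF] using h1
  have hev : ∀ᶠ ε in 𝓝[>] (0:ℝ), psiF P m₀ A ε t ≤ Rv c u (t, x) := by
    filter_upwards [self_mem_nhdsWithin] with ε hε
    exact (hlow ε hε).1
  have hev' : ∀ᶠ ε in 𝓝[>] (0:ℝ), psiF P m₀ A ε t ≤ Sv c u (t, x) := by
    filter_upwards [self_mem_nhdsWithin] with ε hε
    exact (hlow ε hε).2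
  have hRlow : P + (m₀ - P) * Real.exp (A * P * t) ≤ Rv c u (t, x) :=
    le_of_tendsto htend hev
  have hSlow : P + (m₀ - P) * Real.exp (A * P * t) ≤ Sv c u (t, x) :=
    le_of_tendsto htend hev'
  have hexp : (m₀ - P) * Real.exp (A * P * T) ≤ (m₀ - P) * Real.exp (A * P * t) := by
    apply mul_le_mul_of_nonpos_left _ (by linarith : m₀ - P ≤ 0)
    exact Real.exp_le_exp.mpr (mul_le_mul_of_nonneg_left ht.2 (mul_nonneg hA0 hP0))
  exact ⟨⟨by linarith, hupR t ht x⟩, by linarith, hupS t ht x⟩
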